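/- arXiv:2306.01172 — 8 statements merged into one kernel-verified Lean document; each statement's English description precedes it below -/
import Mathlib

section
/- (Uniqueness, part of Lemma 2.1) Assume G is injective and α = M ν⁻² F < 1. If u₁ ∈ V and u₂ ∈ V are both weak NSE solutions (i.e., ν ⟨G uᵢ, G v⟩ + b(uᵢ,uᵢ,v) = f(v) for all v ∈ V, i = 1, 2), then u₁ = u₂. -/
/-!
Testing the energy identity of a solution against itself kills the trilinear term, so
`ν ‖G u₁‖ ≤ F`. Subtracting the two equations and testing against `w = u₁ - u₂` leaves
`ν ‖G w‖² = -b(w, u₁, w) ≤ M ‖G u₁‖ ‖G w‖² ≤ (M F / ν) ‖G w‖²`, which forces `G w = 0`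
when `M F / ν² < 1`; injectivity of `G` then gives `u₁ = u₂`.
-/

section WeakSolution

variable {V W : Type*} [AddCommGroup V] [Module ℝ V]
  [NormedAddCommGroup W] [InnerProductSpace ℝ W]

def IsWeakNSESolution (G : V →ₗ[ℝ] W) (b : V →ₗ[ℝ] V →ₗ[ℝ] V →ₗ[ℝ] ℝ) (f : V →ₗ[ℝ] ℝ)
    (ν : ℝ) (u : V) : Prop :=
  ∀ v : V, ν * (inner ℝ (G u) (G v) : ℝ) + b u u v = f v

variable {G : V →ₗ[ℝ] W} {b : V →ₗ[ℝ] V →ₗ[ℝ] V →ₗ[ℝ] ℝ} {f : V →ₗ[ℝ] ℝ} {ν : ℝ}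

namespace IsWeakNSESolution

theorem mul_norm_sq_eq {u : V} (hu : IsWeakNSESolution G b f ν u) (hskew : b u u u = 0) :
    ν * ‖G u‖ ^ 2 = f u := by
  simpa only [real_inner_self_eq_norm_sq, hskew, add_zero] using hu u

theorem mul_norm_le {u : V} {F : ℝ} (hu : IsWeakNSESolution G b f ν u) (hskew : b u u u = 0)
    (hF : 0 ≤ F) (hf : ∀ v, |f v| ≤ F * ‖G v‖) : ν * ‖G u‖ ≤ F := by
  rcases (norm_nonneg (G u)).eq_or_lt with h0 | hpos
  · simpa [← h0] using hF
  · refine le_of_mul_le_mul_right ?_ hpos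
    calc ν * ‖G u‖ * ‖G u‖ = f u := by rw [← hu.mul_norm_sq_eq hskew]; ring
      _ ≤ |f u| := le_abs_self _
      _ ≤ F * ‖G u‖ := hf u

theorem inner_sub_add {u₁ u₂ : V} (hu₁ : IsWeakNSESolution G b f ν u₁)
    (hu₂ : IsWeakNSESolution G b f ν u₂) (v : V) :
    ν * (inner ℝ (G (u₁ - u₂)) (G v) : ℝ) + b (u₁ - u₂) u₁ v + b u₂ (u₁ - u₂) v = 0 := by
  have h₁ := hu₁ v
  have h₂ := hu₂ v
  simp only [map_sub, LinearMap.sub_apply, inner_sub_left]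
  linarith

theorem mul_norm_sub_sq_eq {u₁ u₂ : V} (hu₁ : IsWeakNSESolution G b f ν u₁)
    (hu₂ : IsWeakNSESolution G b f ν u₂) (hskew : b u₂ (u₁ - u₂) (u₁ - u₂) = 0) :
    ν * ‖G (u₁ - u₂)‖ ^ 2 = -b (u₁ - u₂) u₁ (u₁ - u₂) := by
  have h := hu₁.inner_sub_add hu₂ (u₁ - u₂)
  rw [real_inner_self_eq_norm_sq, hskew] at h
  linarith

end IsWeakNSESolution

end WeakSolution

theorem nse_uniqueness_general
    {V W : Type*} [NormedAddCommGroup V] [InnerProductSpace ℝ V]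
    [NormedAddCommGroup W] [InnerProductSpace ℝ W]
    (G : V →ₗ[ℝ] W) (b : V →ₗ[ℝ] V →ₗ[ℝ] V →ₗ[ℝ] ℝ) (f : V →ₗ[ℝ] ℝ)
    (M F ν : ℝ) (hM : 0 < M) (hF : 0 ≤ F) (hν : 0 < ν)
    (hbskew : ∀ u v : V, b u v v = 0)
    (hb2 : ∀ u w v : V, |b u w v| ≤ M * ‖G u‖ * ‖G w‖ * ‖G v‖)
    (hf : ∀ v : V, |f v| ≤ F * ‖G v‖)
    (hG : Function.Injective G) (hα : (M * F / ν ^ 2) < 1)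
    (u₁ u₂ : V)
    (hu₁ : ∀ v : V, ν * (inner ℝ (G u₁) (G v) : ℝ) + b u₁ u₁ v = f v)
    (hu₂ : ∀ v : V, ν * (inner ℝ (G u₂) (G v) : ℝ) + b u₂ u₂ v = f v)
    : u₁ = u₂ := by
  have hMF : M * F < ν ^ 2 := by rwa [div_lt_one (by positivity)] at hα
  have h_energy : ν * ‖G u₁‖ ≤ F := IsWeakNSESolution.mul_norm_le hu₁ (hbskew u₁ u₁) hF hf
  set w := u₁ - u₂
  have h_diff : ν * ‖G w‖ ^ 2 = -b w u₁ w :=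
    IsWeakNSESolution.mul_norm_sub_sq_eq hu₁ hu₂ (hbskew u₂ w)
  have h_trilinear : -b w u₁ w ≤ M * ‖G w‖ * ‖G u₁‖ * ‖G w‖ :=
    (neg_le_abs _).trans (hb2 w u₁ w)
  have h_absorb : ν ^ 2 * ‖G w‖ ^ 2 ≤ M * F * ‖G w‖ ^ 2 :=
    calc ν ^ 2 * ‖G w‖ ^ 2 = ν * (ν * ‖G w‖ ^ 2) := by ring
      _ ≤ ν * (M * ‖G w‖ * ‖G u₁‖ * ‖G w‖) := by rw [h_diff]; gcongr
      _ = M * ‖G w‖ ^ 2 * (ν * ‖G u₁‖) := by ring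
      _ ≤ M * ‖G w‖ ^ 2 * F := by gcongr
      _ = M * F * ‖G w‖ ^ 2 := by ring
  have hGw : G w = 0 := by
    refine norm_eq_zero.mp (pow_eq_zero_iff two_ne_zero |>.mp ?_)
    nlinarith [sq_nonneg ‖G w‖]
  exact hG (sub_eq_zero.mp (by rwa [← map_sub]))

theorem nse_uniqueness
    {V W : Type*} [NormedAddCommGroup V] [InnerProductSpace ℝ V]
    [NormedAddCommGroup W] [InnerProductSpace ℝ W]
    (G : V →ₗ[ℝ] W) (b : V →ₗ[ℝ] V →ₗ[ℝ] V →ₗ[ℝ] ℝ) (f : V →ₗ[ℝ] ℝ)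
    (M F ν : ℝ) (hM : 0 < M) (hF : 0 ≤ F) (hν : 0 < ν)
    (hbskew : ∀ u v : V, b u v v = 0)
    (hb1 : ∀ u w v : V, |b u w v| ≤ M * Real.sqrt ‖u‖ * Real.sqrt ‖G u‖ * ‖G w‖ * ‖G v‖)
    (hb2 : ∀ u w v : V, |b u w v| ≤ M * ‖G u‖ * ‖G w‖ * ‖G v‖)
    (hb3 : ∀ u w v : V, |b u w v| ≤ M * ‖G u‖ * ‖G w‖ * Real.sqrt ‖v‖ * Real.sqrt ‖G v‖)
    (hf : ∀ v : V, |f v| ≤ F * ‖G v‖)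
    (hG : Function.Injective G) (hα : (M * F / ν ^ 2) < 1)
    (u₁ u₂ : V)
    (hu₁ : ∀ v : V, ν * (inner ℝ (G u₁) (G v) : ℝ) + b u₁ u₁ v = f v)
    (hu₂ : ∀ v : V, ν * (inner ℝ (G u₂) (G v) : ℝ) + b u₂ u₂ v = f v)
    : u₁ = u₂ :=
  nse_uniqueness_general G b f M F ν hM hF hν hbskew hb2 hf hG hα u₁ u₂ hu₁ hu₂
end

section
/- (Global linear convergence of Picard, Lemma 2.2) Let u ∈ V be a weak NSE solution, assume α = M ν⁻² F < 1, and let (u_k)_{k≥0} be any sequence in V such that for every k, u_{k+1} is a Picard step from u_k. Then for every k, ‖G(u − u_k)‖ ≤ α^k ‖G(u − u_0)‖; in particular ‖G(u − u_k)‖ → 0 as k → ∞. -/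
/-!
Subtracting the equations of two Picard steps `u₁ = P w₁`, `u₂ = P w₂` and testing with
`e = u₁ - u₂` kills the convective term in `e` by skew-symmetry, leaving
`ν ‖G e‖² = -b (w₁ - w₂) u₁ e ≤ M ‖G (w₁ - w₂)‖ ‖G u₁‖ ‖G e‖`. Every Picard step obeys the energy
bound `ν ‖G u₁‖ ≤ F`, so `P` contracts by `α = M F / ν²` in `‖G ·‖`. A weak solution is a fixed
point of `P`, whence the geometric error bound.
-/

lemma mul_le_of_mul_sq_le_mul {a c t : ℝ} (ht : 0 ≤ t) (hc : 0 ≤ c) (h : a * t ^ 2 ≤ c * t) :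
    a * t ≤ c := by
  rcases ht.eq_or_lt with rfl | ht
  · simpa using hc
  · exact le_of_mul_le_mul_right (by linarith) ht

section Picard

variable {V W : Type*} [AddCommGroup V] [Module ℝ V] [NormedAddCommGroup W] [InnerProductSpace ℝ W]
  {G : V →ₗ[ℝ] W} {b : V →ₗ[ℝ] V →ₗ[ℝ] V →ₗ[ℝ] ℝ} {f : V →ₗ[ℝ] ℝ} {ν M F : ℝ}

variable (G b f ν) in
/-- `u'` solves the Oseen problem linearised at `w`; a weak NSE solution is a fixed point. -/
def IsPicardStep (w u' : V) : Prop :=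
  ∀ v : V, ν * (inner ℝ (G u') (G v) : ℝ) + b w u' v = f v

namespace IsPicardStep

lemma mul_norm_le (hbskew : ∀ u v : V, b u v v = 0) (hF : 0 ≤ F)
    (hf : ∀ v : V, |f v| ≤ F * ‖G v‖) {w u' : V} (h : IsPicardStep G b f ν w u') :
    ν * ‖G u'‖ ≤ F := by
  have energy : ν * ‖G u'‖ ^ 2 = f u' := by
    simpa [hbskew, real_inner_self_eq_norm_sq] using h u'
  exact mul_le_of_mul_sq_le_mul (norm_nonneg _) hF (energy ▸ (le_abs_self _).trans (hf u'))

lemma mul_sq_norm_sub_eq (hbskew : ∀ u v : V, b u v v = 0) {w₁ u₁ w₂ u₂ : V}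
    (h₁ : IsPicardStep G b f ν w₁ u₁) (h₂ : IsPicardStep G b f ν w₂ u₂) :
    ν * ‖G (u₁ - u₂)‖ ^ 2 = -b (w₁ - w₂) u₁ (u₁ - u₂) := by
  have hinner : ‖G (u₁ - u₂)‖ ^ 2 =
      inner ℝ (G u₁) (G (u₁ - u₂)) - inner ℝ (G u₂) (G (u₁ - u₂)) := by
    rw [← inner_sub_left, ← map_sub, real_inner_self_eq_norm_sq]
  have hskew : b w₂ (u₁ - u₂) (u₁ - u₂) = 0 := hbskew _ _
  have e₁ := h₁ (u₁ - u₂)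
  have e₂ := h₂ (u₁ - u₂)
  simp only [map_sub, LinearMap.sub_apply] at hinner hskew e₁ e₂ ⊢
  linear_combination ν * hinner + e₁ - e₂ - hskew

lemma mul_norm_sub_le (hbskew : ∀ u v : V, b u v v = 0)
    (hb : ∀ u w v : V, |b u w v| ≤ M * ‖G u‖ * ‖G w‖ * ‖G v‖) (hM : 0 ≤ M) {w₁ u₁ w₂ u₂ : V}
    (h₁ : IsPicardStep G b f ν w₁ u₁) (h₂ : IsPicardStep G b f ν w₂ u₂) :
    ν * ‖G (u₁ - u₂)‖ ≤ M * ‖G (w₁ - w₂)‖ * ‖G u₁‖ := by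
  refine mul_le_of_mul_sq_le_mul (norm_nonneg _) (by positivity) ?_
  rw [mul_sq_norm_sub_eq hbskew h₁ h₂]
  exact (neg_le_abs _).trans (hb _ _ _)

lemma norm_sub_le (hbskew : ∀ u v : V, b u v v = 0)
    (hb : ∀ u w v : V, |b u w v| ≤ M * ‖G u‖ * ‖G w‖ * ‖G v‖) (hf : ∀ v : V, |f v| ≤ F * ‖G v‖)
    (hM : 0 ≤ M) (hF : 0 ≤ F) (hν : 0 < ν) {w₁ u₁ w₂ u₂ : V}
    (h₁ : IsPicardStep G b f ν w₁ u₁) (h₂ : IsPicardStep G b f ν w₂ u₂) :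
    ‖G (u₁ - u₂)‖ ≤ M * F / ν ^ 2 * ‖G (w₁ - w₂)‖ := by
  have hlip := mul_norm_sub_le hbskew hb hM h₁ h₂
  have henergy := h₁.mul_norm_le hbskew hF hf
  rw [div_mul_eq_mul_div, le_div_iff₀ (by positivity)]
  calc ‖G (u₁ - u₂)‖ * ν ^ 2 = ν * (ν * ‖G (u₁ - u₂)‖) := by ring
    _ ≤ ν * (M * ‖G (w₁ - w₂)‖ * ‖G u₁‖) := by gcongr
    _ = M * ‖G (w₁ - w₂)‖ * (ν * ‖G u₁‖) := by ring
    _ ≤ M * ‖G (w₁ - w₂)‖ * F := by gcongr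
    _ = M * F * ‖G (w₁ - w₂)‖ := by ring

end IsPicardStep

end Picard

theorem picard_global_convergence_general
    {V W : Type*} [NormedAddCommGroup V] [InnerProductSpace ℝ V]
    [NormedAddCommGroup W] [InnerProductSpace ℝ W]
    (G : V →ₗ[ℝ] W) (b : V →ₗ[ℝ] V →ₗ[ℝ] V →ₗ[ℝ] ℝ) (f : V →ₗ[ℝ] ℝ)
    (M F ν : ℝ) (hM : 0 < M) (hF : 0 ≤ F) (hν : 0 < ν)
    (hbskew : ∀ u v : V, b u v v = 0)
    (hb2 : ∀ u w v : V, |b u w v| ≤ M * ‖G u‖ * ‖G w‖ * ‖G v‖)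
    (hf : ∀ v : V, |f v| ≤ F * ‖G v‖)
    (u : V) (hu : ∀ v : V, ν * (inner ℝ (G u) (G v) : ℝ) + b u u v = f v)
    (hα : (M * F / ν ^ 2) < 1)
    (uk : ℕ → V)
    (hstep : ∀ k, ∀ v : V, ν * (inner ℝ (G (uk (k + 1))) (G v) : ℝ) + b (uk k) (uk (k + 1)) v = f v)
    : (∀ k, ‖G (u - uk k)‖ ≤ (M * F / ν ^ 2) ^ k * ‖G (u - uk 0)‖) ∧
      Filter.Tendsto (fun k => ‖G (u - uk k)‖) Filter.atTop (nhds 0) := by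
  have hα0 : 0 ≤ M * F / ν ^ 2 := by positivity
  have hcontract (k : ℕ) : ‖G (u - uk (k + 1))‖ ≤ M * F / ν ^ 2 * ‖G (u - uk k)‖ :=
    IsPicardStep.norm_sub_le hbskew hb2 hf hM.le hF hν hu (hstep k)
  have hgeom (k : ℕ) : ‖G (u - uk k)‖ ≤ (M * F / ν ^ 2) ^ k * ‖G (u - uk 0)‖ :=
    le_geom (u := fun k => ‖G (u - uk k)‖) hα0 k fun j _ => hcontract j
  refine ⟨hgeom, squeeze_zero (fun _ => norm_nonneg _) hgeom ?_⟩
  simpa using (tendsto_pow_atTop_nhds_zero_of_lt_one hα0 hα).mul_const ‖G (u - uk 0)‖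

theorem picard_global_convergence
    {V W : Type*} [NormedAddCommGroup V] [InnerProductSpace ℝ V]
    [NormedAddCommGroup W] [InnerProductSpace ℝ W]
    (G : V →ₗ[ℝ] W) (b : V →ₗ[ℝ] V →ₗ[ℝ] V →ₗ[ℝ] ℝ) (f : V →ₗ[ℝ] ℝ)
    (M F ν : ℝ) (hM : 0 < M) (hF : 0 ≤ F) (hν : 0 < ν)
    (hbskew : ∀ u v : V, b u v v = 0)
    (hb1 : ∀ u w v : V, |b u w v| ≤ M * Real.sqrt ‖u‖ * Real.sqrt ‖G u‖ * ‖G w‖ * ‖G v‖)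
    (hb2 : ∀ u w v : V, |b u w v| ≤ M * ‖G u‖ * ‖G w‖ * ‖G v‖)
    (hb3 : ∀ u w v : V, |b u w v| ≤ M * ‖G u‖ * ‖G w‖ * Real.sqrt ‖v‖ * Real.sqrt ‖G v‖)
    (hf : ∀ v : V, |f v| ≤ F * ‖G v‖)
    (u : V) (hu : ∀ v : V, ν * (inner ℝ (G u) (G v) : ℝ) + b u u v = f v)
    (hα : (M * F / ν ^ 2) < 1)
    (uk : ℕ → V)
    (hstep : ∀ k, ∀ v : V, ν * (inner ℝ (G (uk (k + 1))) (G v) : ℝ) + b (uk k) (uk (k + 1)) v = f v)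
    : (∀ k, ‖G (u - uk k)‖ ≤ (M * F / ν ^ 2) ^ k * ‖G (u - uk 0)‖) ∧
      Filter.Tendsto (fun k => ‖G (u - uk k)‖) Filter.atTop (nhds 0) :=
  picard_global_convergence_general G b f M F ν hM hF hν hbskew hb2 hf u hu hα uk hstep
end

section
/- (One-step Newton stability, key step in the proof of Lemma 6.1) Assume 8α ≤ 1 where α = M ν⁻² F. If u_k ∈ V satisfies ‖G u_k‖ ≤ 2 ν⁻¹ F and u_{k+1} ∈ V is a Newton step from u_k, then ‖G u_{k+1}‖ ≤ 2 ν⁻¹ F. -/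
/-!
Testing the Newton equation with `u_{k+1}` itself kills `b(u_k, u_{k+1}, u_{k+1})` and leaves the
energy identity `ν ‖G u_{k+1}‖² = f(u_{k+1}) + b(u_k, u_k, u_{k+1}) - b(u_{k+1}, u_k, u_{k+1})`.
With `R = 2ν⁻¹F`, the smallness `8α ≤ 1` reads `M R ≤ ν/4`, so for `‖G u_k‖ ≤ R` the trilinear
terms contribute at most `F/2 + (ν/4) ‖G u_{k+1}‖`, which gives `(3ν/4) ‖G u_{k+1}‖ ≤ 3F/2`.
-/

section NewtonStep

variable {V W : Type*} [NormedAddCommGroup V] [InnerProductSpace ℝ V]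
  [NormedAddCommGroup W] [InnerProductSpace ℝ W]
  (G : V →ₗ[ℝ] W) (b : V →ₗ[ℝ] V →ₗ[ℝ] V →ₗ[ℝ] ℝ) (f : V →ₗ[ℝ] ℝ)

def IsNewtonStep (ν : ℝ) (uk uk1 : V) : Prop :=
  ∀ v : V, ν * (inner ℝ (G uk1) (G v) : ℝ) + b uk uk1 v + b uk1 uk v = f v + b uk uk v

variable {G b f}

theorem IsNewtonStep.energy_identity {ν : ℝ} {uk uk1 : V} (h : IsNewtonStep G b f ν uk uk1)
    (hbskew : ∀ u v : V, b u v v = 0) :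
    ν * ‖G uk1‖ ^ 2 = f uk1 + b uk uk uk1 - b uk1 uk uk1 := by
  have hself := h uk1
  rw [hbskew, real_inner_self_eq_norm_sq] at hself
  linarith

theorem IsNewtonStep.energy_le {M F ν : ℝ} {uk uk1 : V} (h : IsNewtonStep G b f ν uk uk1)
    (hbskew : ∀ u v : V, b u v v = 0)
    (hb2 : ∀ u w v : V, |b u w v| ≤ M * ‖G u‖ * ‖G w‖ * ‖G v‖)
    (hf : ∀ v : V, |f v| ≤ F * ‖G v‖) :
    ν * ‖G uk1‖ ^ 2 ≤ (F + M * ‖G uk‖ ^ 2 + M * ‖G uk‖ * ‖G uk1‖) * ‖G uk1‖ := by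
  have hforce := (le_abs_self _).trans (hf uk1)
  have hconv := (le_abs_self _).trans (hb2 uk uk uk1)
  have hlin := (neg_le_abs _).trans (hb2 uk1 uk uk1)
  rw [h.energy_identity hbskew]
  linarith

end NewtonStep

theorem mul_two_inv_mul_le_of_smallness {M F ν : ℝ} (hν : 0 < ν) (hα : 8 * (M * F / ν ^ 2) ≤ 1) :
    M * (2 * ν⁻¹ * F) ≤ ν / 4 := by
  have h : M * F / ν ^ 2 ≤ 1 / 8 := by linarith
  rw [div_le_iff₀ (by positivity)] at h
  calc M * (2 * ν⁻¹ * F) = 2 * (M * F) / ν := by field_simp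
    _ ≤ 2 * (1 / 8 * ν ^ 2) / ν := by gcongr
    _ = ν / 4 := by field_simp; ring

theorem le_two_inv_mul_of_energy_le {M F ν X Y : ℝ} (hν : 0 < ν) (hM : 0 ≤ M)
    (hsmall : M * (2 * ν⁻¹ * F) ≤ ν / 4) (hY0 : 0 ≤ Y) (hY : Y ≤ 2 * ν⁻¹ * F) (hX0 : 0 ≤ X)
    (henergy : ν * X ^ 2 ≤ (F + M * Y ^ 2 + M * Y * X) * X) :
    X ≤ 2 * ν⁻¹ * F := by
  rcases hX0.eq_or_lt with rfl | hXpos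
  · exact hY0.trans hY
  have hF : F = ν * (2 * ν⁻¹ * F) / 2 := by field_simp
  have hMY : M * Y ≤ ν / 4 := (mul_le_mul_of_nonneg_left hY hM).trans hsmall
  have hlin : ν * X ≤ F + M * Y * Y + M * Y * X := by
    have : ν * X * X ≤ (F + M * Y * Y + M * Y * X) * X := by linarith
    exact le_of_mul_le_mul_right this hXpos
  have hquad : M * Y * Y ≤ ν / 4 * (2 * ν⁻¹ * F) :=
    (mul_le_mul_of_nonneg_right hMY hY0).trans (mul_le_mul_of_nonneg_left hY (by positivity))
  have hcross : M * Y * X ≤ ν / 4 * X := mul_le_mul_of_nonneg_right hMY hX0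
  nlinarith

theorem newton_one_step_stability_general
    {V W : Type*} [NormedAddCommGroup V] [InnerProductSpace ℝ V]
    [NormedAddCommGroup W] [InnerProductSpace ℝ W]
    (G : V →ₗ[ℝ] W) (b : V →ₗ[ℝ] V →ₗ[ℝ] V →ₗ[ℝ] ℝ) (f : V →ₗ[ℝ] ℝ)
    (M F ν : ℝ) (hM : 0 < M) (hν : 0 < ν)
    (hbskew : ∀ u v : V, b u v v = 0)
    (hb2 : ∀ u w v : V, |b u w v| ≤ M * ‖G u‖ * ‖G w‖ * ‖G v‖)
    (hf : ∀ v : V, |f v| ≤ F * ‖G v‖)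
    (hα : 8 * (M * F / ν ^ 2) ≤ 1)
    (uk uk1 : V) (hk : ‖G uk‖ ≤ 2 * ν⁻¹ * F)
    (hstep : ∀ v : V, ν * (inner ℝ (G uk1) (G v) : ℝ) + b uk uk1 v + b uk1 uk v
      = f v + b uk uk v)
    : ‖G uk1‖ ≤ 2 * ν⁻¹ * F :=
  have hnewton : IsNewtonStep G b f ν uk uk1 := hstep
  le_two_inv_mul_of_energy_le hν hM.le (mul_two_inv_mul_le_of_smallness hν hα) (norm_nonneg _) hk
    (norm_nonneg _) (hnewton.energy_le hbskew hb2 hf)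

theorem newton_one_step_stability
    {V W : Type*} [NormedAddCommGroup V] [InnerProductSpace ℝ V]
    [NormedAddCommGroup W] [InnerProductSpace ℝ W]
    (G : V →ₗ[ℝ] W) (b : V →ₗ[ℝ] V →ₗ[ℝ] V →ₗ[ℝ] ℝ) (f : V →ₗ[ℝ] ℝ)
    (M F ν : ℝ) (hM : 0 < M) (hF : 0 ≤ F) (hν : 0 < ν)
    (hbskew : ∀ u v : V, b u v v = 0)
    (hb1 : ∀ u w v : V, |b u w v| ≤ M * Real.sqrt ‖u‖ * Real.sqrt ‖G u‖ * ‖G w‖ * ‖G v‖)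
    (hb2 : ∀ u w v : V, |b u w v| ≤ M * ‖G u‖ * ‖G w‖ * ‖G v‖)
    (hb3 : ∀ u w v : V, |b u w v| ≤ M * ‖G u‖ * ‖G w‖ * Real.sqrt ‖v‖ * Real.sqrt ‖G v‖)
    (hf : ∀ v : V, |f v| ≤ F * ‖G v‖)
    (hα : 8 * (M * F / ν ^ 2) ≤ 1)
    (uk uk1 : V) (hk : ‖G uk‖ ≤ 2 * ν⁻¹ * F)
    (hstep : ∀ v : V, ν * (inner ℝ (G uk1) (G v) : ℝ) + b uk uk1 v + b uk1 uk v
      = f v + b uk uk v)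
    : ‖G uk1‖ ≤ 2 * ν⁻¹ * F :=
  newton_one_step_stability_general G b f M F ν hM hν hbskew hb2 hf hα uk uk1 hk hstep
end

section
/- (CDA-Picard energy estimate, inequality (3.8) in the proof of Theorem 3.1) Let u ∈ V be a weak NSE solution, and let u_{k+1} ∈ V be a CDA-Picard step from u_k ∈ V. Write e_j = u − u_j. Then for every B > 0, ν ‖G e_{k+1}‖² + μ ‖I_H e_{k+1}‖² ≤ (ν/2) ‖G e_{k+1}‖² + B ν ‖G e_k‖² + (ν α⁴ / (16 B)) ‖e_k‖², where α = M ν⁻² F. -/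
/-!
Testing the difference of the NSE equation and the CDA-Picard step with `u - u_{k+1}` kills the
convection term `b(u_k, u - u_{k+1}, u - u_{k+1})`, leaving `ν ‖G e_{k+1}‖² + μ ‖I_H e_{k+1}‖²
= -b(e_k, u, e_{k+1})`. The a priori bound `‖G u‖ ≤ F / ν` and the first bound on `b` turn the right
side into `ν α ‖e_k‖^{1/2} ‖G e_k‖^{1/2} ‖G e_{k+1}‖`, which two applications of Young's inequality
split into the three terms of the estimate.
-/

section NavierStokes

variable {V W : Type*} [NormedAddCommGroup V] [InnerProductSpace ℝ V]
  [NormedAddCommGroup W] [InnerProductSpace ℝ W]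
  {G : V →ₗ[ℝ] W} {b : V →ₗ[ℝ] V →ₗ[ℝ] V →ₗ[ℝ] ℝ} {f : V →ₗ[ℝ] ℝ} {ν : ℝ}

theorem norm_apply_le_div_of_weak_solution {F : ℝ} (hF : 0 ≤ F) (hν : 0 < ν)
    (hbskew : ∀ u v : V, b u v v = 0) (hf : ∀ v : V, |f v| ≤ F * ‖G v‖) {u : V}
    (hu : ∀ v : V, ν * (inner ℝ (G u) (G v) : ℝ) + b u u v = f v) :
    ‖G u‖ ≤ F / ν := by
  have energy : ν * ‖G u‖ ^ 2 = f u := by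
    simpa only [hbskew, add_zero, real_inner_self_eq_norm_sq] using hu u
  have h : ν * ‖G u‖ * ‖G u‖ ≤ F * ‖G u‖ := by
    nlinarith [le_abs_self (f u), hf u]
  rw [le_div_iff₀' hν]
  rcases (norm_nonneg (G u)).eq_or_lt with h0 | hpos
  · rw [← h0, mul_zero]
    exact hF
  · exact le_of_mul_le_mul_right h hpos

theorem cdaPicard_error_identity {IH : V →ₗ[ℝ] V} {μ : ℝ}
    (hbskew : ∀ u v : V, b u v v = 0) {u : V}
    (hu : ∀ v : V, ν * (inner ℝ (G u) (G v) : ℝ) + b u u v = f v) {uk uk1 : V}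
    (hstep : ∀ v : V, ν * (inner ℝ (G uk1) (G v) : ℝ) + b uk uk1 v
      + μ * (inner ℝ (IH (uk1 - u)) (IH v) : ℝ) = f v) :
    ν * ‖G (u - uk1)‖ ^ 2 + μ * ‖IH (u - uk1)‖ ^ 2 = -b (u - uk) u (u - uk1) := by
  have hsol := hu (u - uk1)
  have hcda := hstep (u - uk1)
  have hskew := hbskew uk (u - uk1)
  rw [← real_inner_self_eq_norm_sq, ← real_inner_self_eq_norm_sq]
  simp only [map_sub, LinearMap.sub_apply, inner_sub_left, inner_sub_right] at hsol hcda hskew ⊢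
  linarith

end NavierStokes

theorem mul_sqrt_mul_sqrt_mul_le_young {ν a B x y z : ℝ} (hν : 0 < ν) (hB : 0 < B)
    (hy : 0 ≤ y) (hz : 0 ≤ z) :
    ν * a * (√z * √y) * x ≤
      ν / 2 * x ^ 2 + B * ν * y ^ 2 + ν * a ^ 4 / (16 * B) * z ^ 2 := by
  have first : a * (√z * √y) * x ≤ x ^ 2 / 2 + a ^ 2 * (z * y) / 2 := by
    have := two_mul_le_add_sq (a * (√z * √y)) x
    rw [mul_pow, mul_pow, Real.sq_sqrt hz, Real.sq_sqrt hy] at this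
    linarith
  have second : a ^ 2 * (z * y) / 2 ≤ B * y ^ 2 + a ^ 4 / (16 * B) * z ^ 2 := by
    rw [← sub_nonneg]
    have key : B * y ^ 2 + a ^ 4 / (16 * B) * z ^ 2 - a ^ 2 * (z * y) / 2
        = (4 * B * y - a ^ 2 * z) ^ 2 / (16 * B) := by
      field_simp
      ring
    rw [key]
    positivity
  calc ν * a * (√z * √y) * x = ν * (a * (√z * √y) * x) := by ring
    _ ≤ ν * (x ^ 2 / 2 + (B * y ^ 2 + a ^ 4 / (16 * B) * z ^ 2)) := by gcongr; linarith
    _ = _ := by ring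

theorem cda_picard_energy_estimate_general
    {V W : Type*} [NormedAddCommGroup V] [InnerProductSpace ℝ V]
    [NormedAddCommGroup W] [InnerProductSpace ℝ W]
    (G : V →ₗ[ℝ] W) (b : V →ₗ[ℝ] V →ₗ[ℝ] V →ₗ[ℝ] ℝ) (f : V →ₗ[ℝ] ℝ)
    (M F ν : ℝ) (hM : 0 < M) (hF : 0 ≤ F) (hν : 0 < ν)
    (hbskew : ∀ u v : V, b u v v = 0)
    (hb1 : ∀ u w v : V, |b u w v| ≤ M * Real.sqrt ‖u‖ * Real.sqrt ‖G u‖ * ‖G w‖ * ‖G v‖)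
    (hf : ∀ v : V, |f v| ≤ F * ‖G v‖)
    (IH : V →ₗ[ℝ] V) (μ : ℝ)
    (u : V) (hu : ∀ v : V, ν * (inner ℝ (G u) (G v) : ℝ) + b u u v = f v)
    (uk uk1 : V)
    (hstep : ∀ v : V, ν * (inner ℝ (G uk1) (G v) : ℝ) + b uk uk1 v
      + μ * (inner ℝ (IH (uk1 - u)) (IH v) : ℝ) = f v)
    : ∀ B : ℝ, 0 < B →
      ν * ‖G (u - uk1)‖ ^ 2 + μ * ‖IH (u - uk1)‖ ^ 2 ≤
        (ν / 2) * ‖G (u - uk1)‖ ^ 2 + B * ν * ‖G (u - uk)‖ ^ 2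
          + (ν * (M * F / ν ^ 2) ^ 4 / (16 * B)) * ‖u - uk‖ ^ 2 := by
  intro B hB
  have hGu := norm_apply_le_div_of_weak_solution hF hν hbskew hf hu
  calc ν * ‖G (u - uk1)‖ ^ 2 + μ * ‖IH (u - uk1)‖ ^ 2 = -b (u - uk) u (u - uk1) :=
        cdaPicard_error_identity hbskew hu hstep
    _ ≤ |b (u - uk) u (u - uk1)| := neg_le_abs _
    _ ≤ M * √‖u - uk‖ * √‖G (u - uk)‖ * ‖G u‖ * ‖G (u - uk1)‖ := hb1 _ _ _
    _ ≤ M * √‖u - uk‖ * √‖G (u - uk)‖ * (F / ν) * ‖G (u - uk1)‖ := by gcongr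
    _ = ν * (M * F / ν ^ 2) * (√‖u - uk‖ * √‖G (u - uk)‖) * ‖G (u - uk1)‖ := by
        field_simp
    _ ≤ _ := mul_sqrt_mul_sqrt_mul_le_young hν hB (norm_nonneg _) (norm_nonneg _)

theorem cda_picard_energy_estimate
    {V W : Type*} [NormedAddCommGroup V] [InnerProductSpace ℝ V]
    [NormedAddCommGroup W] [InnerProductSpace ℝ W]
    (G : V →ₗ[ℝ] W) (b : V →ₗ[ℝ] V →ₗ[ℝ] V →ₗ[ℝ] ℝ) (f : V →ₗ[ℝ] ℝ)
    (M F ν : ℝ) (hM : 0 < M) (hF : 0 ≤ F) (hν : 0 < ν)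
    (hbskew : ∀ u v : V, b u v v = 0)
    (hb1 : ∀ u w v : V, |b u w v| ≤ M * Real.sqrt ‖u‖ * Real.sqrt ‖G u‖ * ‖G w‖ * ‖G v‖)
    (hb2 : ∀ u w v : V, |b u w v| ≤ M * ‖G u‖ * ‖G w‖ * ‖G v‖)
    (hb3 : ∀ u w v : V, |b u w v| ≤ M * ‖G u‖ * ‖G w‖ * Real.sqrt ‖v‖ * Real.sqrt ‖G v‖)
    (hf : ∀ v : V, |f v| ≤ F * ‖G v‖)
    (IH : V →ₗ[ℝ] V) (CI H μ : ℝ) (hCI : 0 < CI) (hH : 0 < H) (hμ : 0 < μ)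
    (hIH : ∀ v : V, ‖v - IH v‖ ≤ CI * H * ‖G v‖)
    (u : V) (hu : ∀ v : V, ν * (inner ℝ (G u) (G v) : ℝ) + b u u v = f v)
    (uk uk1 : V)
    (hstep : ∀ v : V, ν * (inner ℝ (G uk1) (G v) : ℝ) + b uk uk1 v
      + μ * (inner ℝ (IH (uk1 - u)) (IH v) : ℝ) = f v)
    : ∀ B : ℝ, 0 < B →
      ν * ‖G (u - uk1)‖ ^ 2 + μ * ‖IH (u - uk1)‖ ^ 2 ≤
        (ν / 2) * ‖G (u - uk1)‖ ^ 2 + B * ν * ‖G (u - uk)‖ ^ 2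
          + (ν * (M * F / ν ^ 2) ^ 4 / (16 * B)) * ‖u - uk‖ ^ 2 :=
  cda_picard_energy_estimate_general G b f M F ν hM hF hν hbskew hb1 hf IH μ u hu uk uk1 hstep
end

section
/- (One-step contraction of CDA-Picard, Theorem 3.1) Let u ∈ V be a weak NSE solution, assume μ ≥ ν/(4 C_I² H²), and let u_{k+1} ∈ V be a CDA-Picard step from u_k ∈ V. Then ‖u − u_{k+1}‖_* ≤ √(2 C_I H) · α · ‖u − u_k‖_*, where α = M ν⁻² F and ‖v‖_* = (‖G v‖² + ‖v‖²/(2 C_I² H²))^(1/2). -/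
/-!
Subtracting the CDA-Picard step from the NSE and testing with the error `e = u - u_{k+1}` gives,
by skew-symmetry of `b`, the energy identity `ν ‖∇e‖² + μ ‖I_H e‖² = -b(u - u_k, u, e)`.
The first trilinear bound together with the a priori bound `‖∇u‖ ≤ F / ν` controls the right-hand
side by `M (F / ν) ‖u - u_k‖^(1/2) ‖∇(u - u_k)‖^(1/2) ‖∇e‖`. Young's inequality absorbs `‖∇e‖`;
the interpolation estimate and the lower bound on `μ` turn the nudging term into control of
`‖e‖² / (2 C_I² H²)`; a final AM-GM step bounds `‖u - u_k‖ ‖∇(u - u_k)‖` by `C_I H ‖u - u_k‖_*²`.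
-/

namespace CDAPicard

/-- Here `A`, `B`, `N` stand for `‖∇e‖`, `‖I_H e‖`, `‖e‖`. -/
theorem sq_add_div_le_of_energy_le {ν μ c h A B N β : ℝ} (hν : 0 < ν) (hc : 0 < c) (hh : 0 < h)
    (hμ : ν ≤ 4 * c ^ 2 * h ^ 2 * μ) (hN : N ^ 2 ≤ 2 * c ^ 2 * h ^ 2 * A ^ 2 + 2 * B ^ 2)
    (hE : ν * A ^ 2 + μ * B ^ 2 ≤ β * A) :
    A ^ 2 + N ^ 2 / (2 * c ^ 2 * h ^ 2) ≤ 2 * (β / ν) ^ 2 := by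
  have young : ν * A ^ 2 + 2 * μ * B ^ 2 ≤ β ^ 2 / ν := by
    rw [le_div_iff₀ hν]
    nlinarith [sq_nonneg (ν * A - β)]
  have interp : N ^ 2 / (2 * c ^ 2 * h ^ 2) ≤ A ^ 2 + B ^ 2 / (c ^ 2 * h ^ 2) := by
    rw [div_le_iff₀ (by positivity), add_mul, div_mul_eq_mul_div, show
      B ^ 2 * (2 * c ^ 2 * h ^ 2) / (c ^ 2 * h ^ 2) = 2 * B ^ 2 by field_simp]
    linarith
  have nudge : B ^ 2 / (c ^ 2 * h ^ 2) ≤ 4 * μ * B ^ 2 / ν := by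
    rw [div_le_div_iff₀ (by positivity) hν]
    nlinarith [mul_le_mul_of_nonneg_right hμ (sq_nonneg B)]
  calc A ^ 2 + N ^ 2 / (2 * c ^ 2 * h ^ 2) ≤ 2 * (ν * A ^ 2 + 2 * μ * B ^ 2) / ν := by
        have : 2 * (ν * A ^ 2 + 2 * μ * B ^ 2) / ν = 2 * A ^ 2 + 4 * μ * B ^ 2 / ν := by
          field_simp; ring
        linarith
    _ ≤ 2 * (β ^ 2 / ν) / ν := by gcongr
    _ = 2 * (β / ν) ^ 2 := by ring

theorem mul_le_mul_sq_add_div {a g c h : ℝ} (hc : 0 < c) (hh : 0 < h) :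
    a * g ≤ c * h * (g ^ 2 + a ^ 2 / (2 * c ^ 2 * h ^ 2)) := by
  have hch : 0 < c * h := mul_pos hc hh
  have key : c * h * (g ^ 2 + a ^ 2 / (2 * c ^ 2 * h ^ 2)) - a * g
      = (c * h * g - a / 2) ^ 2 / (c * h) + a ^ 2 / (4 * (c * h)) := by
    field_simp; ring
  rw [← sub_nonneg, key]
  positivity

theorem norm_sq_le_of_norm_sub_le {E : Type*} [SeminormedAddCommGroup E] {x y : E} {r : ℝ}
    (hxy : ‖x - y‖ ≤ r) : ‖x‖ ^ 2 ≤ 2 * r ^ 2 + 2 * ‖y‖ ^ 2 := by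
  calc ‖x‖ ^ 2 ≤ (r + ‖y‖) ^ 2 := by
        gcongr; linarith [norm_le_norm_add_norm_sub' x y]
    _ ≤ 2 * r ^ 2 + 2 * ‖y‖ ^ 2 := by linarith [add_sq_le (a := r) (b := ‖y‖)]

variable {V W : Type*} [NormedAddCommGroup V] [InnerProductSpace ℝ V]
  [NormedAddCommGroup W] [InnerProductSpace ℝ W]
  {G : V →ₗ[ℝ] W} {b : V →ₗ[ℝ] V →ₗ[ℝ] V →ₗ[ℝ] ℝ} {f : V →ₗ[ℝ] ℝ} {ν : ℝ} {u : V}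

theorem mul_norm_le_of_weak_solution {F : ℝ} (hF : 0 ≤ F)
    (hbskew : ∀ u v : V, b u v v = 0) (hf : ∀ v : V, |f v| ≤ F * ‖G v‖)
    (hu : ∀ v : V, ν * (inner ℝ (G u) (G v) : ℝ) + b u u v = f v) :
    ν * ‖G u‖ ≤ F := by
  have energy : ν * ‖G u‖ ^ 2 ≤ F * ‖G u‖ := by
    have hself := hu u
    rw [hbskew, real_inner_self_eq_norm_sq] at hself
    linarith [le_abs_self (f u), hf u]
  rcases (norm_nonneg (G u)).eq_or_lt with h0 | hpos
  · simpa [← h0] using hF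
  · nlinarith

theorem energy_identity {IH : V →ₗ[ℝ] V} {μ : ℝ} {uk uk1 : V}
    (hbskew : ∀ u v : V, b u v v = 0)
    (hu : ∀ v : V, ν * (inner ℝ (G u) (G v) : ℝ) + b u u v = f v)
    (hstep : ∀ v : V, ν * (inner ℝ (G uk1) (G v) : ℝ) + b uk uk1 v
      + μ * (inner ℝ (IH (uk1 - u)) (IH v) : ℝ) = f v) :
    ν * ‖G (u - uk1)‖ ^ 2 + μ * ‖IH (u - uk1)‖ ^ 2 = -b (u - uk) u (u - uk1) := by
  have hskew := hbskew uk (u - uk1)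
  have hdiff := congr($(hu (u - uk1)) - $(hstep (u - uk1)))
  rw [← real_inner_self_eq_norm_sq, ← real_inner_self_eq_norm_sq]
  simp only [map_sub, LinearMap.sub_apply, inner_sub_left, inner_sub_right] at hskew hdiff ⊢
  linear_combination hdiff - hskew

end CDAPicard

open CDAPicard in
theorem cda_picard_one_step_contraction_general
    {V W : Type*} [NormedAddCommGroup V] [InnerProductSpace ℝ V]
    [NormedAddCommGroup W] [InnerProductSpace ℝ W]
    (G : V →ₗ[ℝ] W) (b : V →ₗ[ℝ] V →ₗ[ℝ] V →ₗ[ℝ] ℝ) (f : V →ₗ[ℝ] ℝ)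
    (M F ν : ℝ) (hM : 0 < M) (hF : 0 ≤ F) (hν : 0 < ν)
    (hbskew : ∀ u v : V, b u v v = 0)
    (hb1 : ∀ u w v : V, |b u w v| ≤ M * Real.sqrt ‖u‖ * Real.sqrt ‖G u‖ * ‖G w‖ * ‖G v‖)
    (hf : ∀ v : V, |f v| ≤ F * ‖G v‖)
    (IH : V →ₗ[ℝ] V) (CI H μ : ℝ) (hCI : 0 < CI) (hH : 0 < H)
    (hIH : ∀ v : V, ‖v - IH v‖ ≤ CI * H * ‖G v‖)
    (u : V) (hu : ∀ v : V, ν * (inner ℝ (G u) (G v) : ℝ) + b u u v = f v)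
    (hμ' : μ ≥ ν / (4 * CI ^ 2 * H ^ 2))
    (uk uk1 : V)
    (hstep : ∀ v : V, ν * (inner ℝ (G uk1) (G v) : ℝ) + b uk uk1 v
      + μ * (inner ℝ (IH (uk1 - u)) (IH v) : ℝ) = f v)
    : Real.sqrt (‖G (u - uk1)‖ ^ 2 + ‖u - uk1‖ ^ 2 / (2 * CI ^ 2 * H ^ 2)) ≤
      Real.sqrt (2 * CI * H) * (M * F / ν ^ 2) * Real.sqrt (‖G (u - uk)‖ ^ 2 + ‖u - uk‖ ^ 2 / (2 * CI ^ 2 * H ^ 2)) := by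
  set e := u - uk1
  set a := ‖u - uk‖
  set g := ‖G (u - uk)‖
  set α := M * F / ν ^ 2
  have hgu : ‖G u‖ ≤ F / ν := (le_div_iff₀' hν).mpr (mul_norm_le_of_weak_solution hF hbskew hf hu)
  have henergy : ν * ‖G e‖ ^ 2 + μ * ‖IH e‖ ^ 2 ≤ M * √a * √g * (F / ν) * ‖G e‖ :=
    calc _ = -b (u - uk) u e := energy_identity hbskew hu hstep
      _ ≤ |b (u - uk) u e| := neg_le_abs _
      _ ≤ M * √a * √g * ‖G u‖ * ‖G e‖ := hb1 _ _ _
      _ ≤ M * √a * √g * (F / ν) * ‖G e‖ := by gcongr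
  have hinterp : ‖e‖ ^ 2 ≤ 2 * CI ^ 2 * H ^ 2 * ‖G e‖ ^ 2 + 2 * ‖IH e‖ ^ 2 := by
    convert norm_sq_le_of_norm_sub_le (hIH e) using 2; ring
  have hnudge : ν ≤ 4 * CI ^ 2 * H ^ 2 * μ := (div_le_iff₀' (by positivity)).mp hμ'
  have hcoeff : (M * √a * √g * (F / ν) / ν) ^ 2 = α ^ 2 * (a * g) := by
    rw [show M * √a * √g * (F / ν) / ν = α * (√a * √g) by ring, mul_pow, mul_pow,
      Real.sq_sqrt (norm_nonneg _), Real.sq_sqrt (norm_nonneg _)]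
  calc √(‖G e‖ ^ 2 + ‖e‖ ^ 2 / (2 * CI ^ 2 * H ^ 2))
      ≤ √(2 * (M * √a * √g * (F / ν) / ν) ^ 2) := Real.sqrt_le_sqrt <|
        sq_add_div_le_of_energy_le hν hCI hH hnudge hinterp henergy
    _ ≤ √(2 * CI * H * α ^ 2 * (g ^ 2 + a ^ 2 / (2 * CI ^ 2 * H ^ 2))) := by
        refine Real.sqrt_le_sqrt ?_
        rw [hcoeff]
        linarith [mul_le_mul_of_nonneg_left (mul_le_mul_sq_add_div (a := a) (g := g) hCI hH)
          (sq_nonneg α)]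
    _ = √(2 * CI * H) * α * √(g ^ 2 + a ^ 2 / (2 * CI ^ 2 * H ^ 2)) := by
        rw [Real.sqrt_mul (by positivity), Real.sqrt_mul (by positivity),
          Real.sqrt_sq (by positivity)]

theorem cda_picard_one_step_contraction
    {V W : Type*} [NormedAddCommGroup V] [InnerProductSpace ℝ V]
    [NormedAddCommGroup W] [InnerProductSpace ℝ W]
    (G : V →ₗ[ℝ] W) (b : V →ₗ[ℝ] V →ₗ[ℝ] V →ₗ[ℝ] ℝ) (f : V →ₗ[ℝ] ℝ)
    (M F ν : ℝ) (hM : 0 < M) (hF : 0 ≤ F) (hν : 0 < ν)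
    (hbskew : ∀ u v : V, b u v v = 0)
    (hb1 : ∀ u w v : V, |b u w v| ≤ M * Real.sqrt ‖u‖ * Real.sqrt ‖G u‖ * ‖G w‖ * ‖G v‖)
    (hb2 : ∀ u w v : V, |b u w v| ≤ M * ‖G u‖ * ‖G w‖ * ‖G v‖)
    (hb3 : ∀ u w v : V, |b u w v| ≤ M * ‖G u‖ * ‖G w‖ * Real.sqrt ‖v‖ * Real.sqrt ‖G v‖)
    (hf : ∀ v : V, |f v| ≤ F * ‖G v‖)
    (IH : V →ₗ[ℝ] V) (CI H μ : ℝ) (hCI : 0 < CI) (hH : 0 < H) (hμ : 0 < μ)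
    (hIH : ∀ v : V, ‖v - IH v‖ ≤ CI * H * ‖G v‖)
    (u : V) (hu : ∀ v : V, ν * (inner ℝ (G u) (G v) : ℝ) + b u u v = f v)
    (hμ' : μ ≥ ν / (4 * CI ^ 2 * H ^ 2))
    (uk uk1 : V)
    (hstep : ∀ v : V, ν * (inner ℝ (G uk1) (G v) : ℝ) + b uk uk1 v
      + μ * (inner ℝ (IH (uk1 - u)) (IH v) : ℝ) = f v)
    : Real.sqrt (‖G (u - uk1)‖ ^ 2 + ‖u - uk1‖ ^ 2 / (2 * CI ^ 2 * H ^ 2)) ≤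
      Real.sqrt (2 * CI * H) * (M * F / ν ^ 2) * Real.sqrt (‖G (u - uk)‖ ^ 2 + ‖u - uk‖ ^ 2 / (2 * CI ^ 2 * H ^ 2)) :=
  cda_picard_one_step_contraction_general G b f M F ν hM hF hν hbskew hb1 hf IH CI H μ hCI hH hIH u
    hu hμ' uk uk1 hstep
end

section
/- (CDA-Newton energy estimate, inequality (4.3) in the proof of Theorem 4.1) Assume 8α < 1 where α = M ν⁻² F, and set β = ν(1 − 2α). Let u ∈ V be a weak NSE solution, let u_k ∈ V satisfy ‖G u_k‖ ≤ 2 ν⁻¹ F, and let u_{k+1} ∈ V be a CDA-Newton step from u_k. Write e_j = u − u_j. Then for every A > 0, β ‖G e_{k+1}‖² + μ ‖I_H e_{k+1}‖² ≤ A ‖G e_k‖⁴ + (M²/(4A)) ‖G e_{k+1}‖ ‖e_{k+1}‖. -/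
/-!
Test the error equation of the Newton step with `e_{k+1}`: skew-symmetry kills
`b(u_k, e_{k+1}, e_{k+1})`, the bound `‖G u_k‖ ≤ 2F/ν` lets `ν ‖G e_{k+1}‖²` absorb
`b(e_{k+1}, u_k, e_{k+1})` up to the factor `1 - 2α`, and the quadratic remainder
`b(e_k, e_k, e_{k+1})` is split by Young's inequality `xy ≤ A x² + y²/(4A)`.
-/

open scoped RealInnerProductSpace

lemma mul_mul_le_mul_sq_add_div_mul_sq {A : ℝ} (hA : 0 < A) (M x y : ℝ) :
    M * x * y ≤ A * x ^ 2 + M ^ 2 / (4 * A) * y ^ 2 := by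
  have hsq : A * x ^ 2 + M ^ 2 / (4 * A) * y ^ 2 - M * x * y
      = (2 * A * x - M * y) ^ 2 / (4 * A) := by
    field_simp
    ring
  have hnonneg : 0 ≤ (2 * A * x - M * y) ^ 2 / (4 * A) := by positivity
  linarith

section CDANewton

variable {V W : Type*} [NormedAddCommGroup V] [InnerProductSpace ℝ V]
  [NormedAddCommGroup W] [InnerProductSpace ℝ W]
  (G : V →ₗ[ℝ] W) (b : V →ₗ[ℝ] V →ₗ[ℝ] V →ₗ[ℝ] ℝ)

/-- Subtracting the Newton step from the NSE leaves only the quadratic remainder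
`b(e_k, e_k, ·)` of the linearization, where `e_j = u - u_j`. -/
lemma newton_error_eq {ν μ : ℝ} {f : V →ₗ[ℝ] ℝ} {IH : V →ₗ[ℝ] V} {u uk uk1 : V}
    (hu : ∀ v, ν * ⟪G u, G v⟫ + b u u v = f v)
    (hstep : ∀ v, ν * ⟪G uk1, G v⟫ + b uk uk1 v + b uk1 uk v
      + μ * ⟪IH (uk1 - u), IH v⟫ = f v + b uk uk v)
    (v : V) :
    ν * ⟪G (u - uk1), G v⟫ + μ * ⟪IH (u - uk1), IH v⟫
      = -b (u - uk) (u - uk) v - b (u - uk1) uk v - b uk (u - uk1) v := by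
  have hsol := hu v
  have hnewton := hstep v
  simp only [map_sub, inner_sub_left, LinearMap.sub_apply] at hnewton ⊢
  linarith

lemma abs_apply_le_of_norm_le {M K : ℝ} (hM : 0 ≤ M)
    (hb : ∀ u w v : V, |b u w v| ≤ M * ‖G u‖ * ‖G w‖ * ‖G v‖)
    {z : V} (hz : ‖G z‖ ≤ K) (w : V) :
    |b w z w| ≤ M * K * ‖G w‖ ^ 2 :=
  calc |b w z w| ≤ M * ‖G w‖ * ‖G z‖ * ‖G w‖ := hb w z w
    _ = M * ‖G z‖ * ‖G w‖ ^ 2 := by ring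
    _ ≤ M * K * ‖G w‖ ^ 2 := by gcongr

lemma abs_apply_self_le {M A : ℝ} (hA : 0 < A)
    (hb : ∀ u w v : V, |b u w v| ≤ M * ‖G u‖ * ‖G w‖ * √‖v‖ * √‖G v‖)
    (w z : V) :
    |b w w z| ≤ A * ‖G w‖ ^ 4 + M ^ 2 / (4 * A) * ‖G z‖ * ‖z‖ :=
  calc |b w w z| ≤ M * ‖G w‖ * ‖G w‖ * √‖z‖ * √‖G z‖ := hb w w z
    _ = M * ‖G w‖ ^ 2 * (√‖z‖ * √‖G z‖) := by ring
    _ ≤ A * (‖G w‖ ^ 2) ^ 2 + M ^ 2 / (4 * A) * (√‖z‖ * √‖G z‖) ^ 2 :=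
      mul_mul_le_mul_sq_add_div_mul_sq hA _ _ _
    _ = A * ‖G w‖ ^ 4 + M ^ 2 / (4 * A) * ‖G z‖ * ‖z‖ := by
      rw [mul_pow, Real.sq_sqrt (norm_nonneg _), Real.sq_sqrt (norm_nonneg _)]
      ring

end CDANewton

theorem cda_newton_energy_estimate_general
    {V W : Type*} [NormedAddCommGroup V] [InnerProductSpace ℝ V]
    [NormedAddCommGroup W] [InnerProductSpace ℝ W]
    (G : V →ₗ[ℝ] W) (b : V →ₗ[ℝ] V →ₗ[ℝ] V →ₗ[ℝ] ℝ) (f : V →ₗ[ℝ] ℝ)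
    (M F ν : ℝ) (hM : 0 < M) (hν : 0 < ν)
    (hbskew : ∀ u v : V, b u v v = 0)
    (hb2 : ∀ u w v : V, |b u w v| ≤ M * ‖G u‖ * ‖G w‖ * ‖G v‖)
    (hb3 : ∀ u w v : V, |b u w v| ≤ M * ‖G u‖ * ‖G w‖ * Real.sqrt ‖v‖ * Real.sqrt ‖G v‖)
    (IH : V →ₗ[ℝ] V) (μ : ℝ)
    (u : V) (hu : ∀ v : V, ν * (inner ℝ (G u) (G v) : ℝ) + b u u v = f v)
    (uk uk1 : V) (hk : ‖G uk‖ ≤ 2 * ν⁻¹ * F)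
    (hstep : ∀ v : V, ν * (inner ℝ (G uk1) (G v) : ℝ) + b uk uk1 v + b uk1 uk v
      + μ * (inner ℝ (IH (uk1 - u)) (IH v) : ℝ) = f v + b uk uk v)
    : ∀ A : ℝ, 0 < A →
      (ν * (1 - 2 * (M * F / ν ^ 2))) * ‖G (u - uk1)‖ ^ 2 + μ * ‖IH (u - uk1)‖ ^ 2 ≤
        A * ‖G (u - uk)‖ ^ 4 + (M ^ 2 / (4 * A)) * ‖G (u - uk1)‖ * ‖u - uk1‖ := by
  intro A hA
  have henergy := newton_error_eq G b hu hstep (u - uk1)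
  rw [hbskew, real_inner_self_eq_norm_sq, real_inner_self_eq_norm_sq] at henergy
  have hquadratic := abs_apply_self_le G b hA hb3 (u - uk) (u - uk1)
  have hlinearized := abs_apply_le_of_norm_le G b hM.le hb2 hk (u - uk1)
  have hconst : M * (2 * ν⁻¹ * F) = 2 * (M * F / ν ^ 2) * ν := by field_simp
  rw [hconst] at hlinearized
  linarith [neg_le_abs (b (u - uk) (u - uk) (u - uk1)), neg_le_abs (b (u - uk1) uk (u - uk1))]

theorem cda_newton_energy_estimate
    {V W : Type*} [NormedAddCommGroup V] [InnerProductSpace ℝ V]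
    [NormedAddCommGroup W] [InnerProductSpace ℝ W]
    (G : V →ₗ[ℝ] W) (b : V →ₗ[ℝ] V →ₗ[ℝ] V →ₗ[ℝ] ℝ) (f : V →ₗ[ℝ] ℝ)
    (M F ν : ℝ) (hM : 0 < M) (hF : 0 ≤ F) (hν : 0 < ν)
    (hbskew : ∀ u v : V, b u v v = 0)
    (hb1 : ∀ u w v : V, |b u w v| ≤ M * Real.sqrt ‖u‖ * Real.sqrt ‖G u‖ * ‖G w‖ * ‖G v‖)
    (hb2 : ∀ u w v : V, |b u w v| ≤ M * ‖G u‖ * ‖G w‖ * ‖G v‖)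
    (hb3 : ∀ u w v : V, |b u w v| ≤ M * ‖G u‖ * ‖G w‖ * Real.sqrt ‖v‖ * Real.sqrt ‖G v‖)
    (hf : ∀ v : V, |f v| ≤ F * ‖G v‖)
    (IH : V →ₗ[ℝ] V) (CI H μ : ℝ) (hCI : 0 < CI) (hH : 0 < H) (hμ : 0 < μ)
    (hIH : ∀ v : V, ‖v - IH v‖ ≤ CI * H * ‖G v‖)
    (u : V) (hu : ∀ v : V, ν * (inner ℝ (G u) (G v) : ℝ) + b u u v = f v)
    (hα : 8 * (M * F / ν ^ 2) < 1)
    (uk uk1 : V) (hk : ‖G uk‖ ≤ 2 * ν⁻¹ * F)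
    (hstep : ∀ v : V, ν * (inner ℝ (G uk1) (G v) : ℝ) + b uk uk1 v + b uk1 uk v
      + μ * (inner ℝ (IH (uk1 - u)) (IH v) : ℝ) = f v + b uk uk v)
    : ∀ A : ℝ, 0 < A →
      (ν * (1 - 2 * (M * F / ν ^ 2))) * ‖G (u - uk1)‖ ^ 2 + μ * ‖IH (u - uk1)‖ ^ 2 ≤
        A * ‖G (u - uk)‖ ^ 4 + (M ^ 2 / (4 * A)) * ‖G (u - uk1)‖ * ‖u - uk1‖ :=
  cda_newton_energy_estimate_general G b f M F ν hM hν hbskew hb2 hb3 IH μ u hu uk uk1 hk hstep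
end

section
/- (One-step quadratic error bound for CDA-Newton, key estimate in Theorem 4.1) Assume 8α < 1 where α = M ν⁻² F, set β = ν(1 − 2α), and assume μ ≥ β/(4 C_I² H²). Let u ∈ V be a weak NSE solution, let u_k ∈ V satisfy ‖G u_k‖ ≤ 2 ν⁻¹ F, and let u_{k+1} ∈ V be a CDA-Newton step from u_k. Then ‖G(u − u_{k+1})‖ ≤ (M √(2 C_I H) / β) ‖G(u − u_k)‖². -/
/-!
Testing the NSE and the CDA-Newton equations with the error `e = u - u_{k+1}` and using the
skew-symmetry of `b` leaves the energy identity `ν‖∇e‖² + μ‖I_H e‖² = -b(d,d,e) - b(e,u_k,e)`,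
`d = u - u_k`. The bound on `‖∇u_k‖` absorbs the second term into `ν‖∇e‖²`, leaving
`β‖∇e‖² + μ‖I_H e‖² ≤ M‖∇d‖² ‖e‖^{1/2} ‖∇e‖^{1/2}`. The interpolation estimate gives
`‖e‖ ≤ C_I H ‖∇e‖ + ‖I_H e‖`, and a large enough nudging parameter `μ` lets the `‖I_H e‖` part
of `‖e‖` be absorbed by the left-hand side, which yields the quadratic bound.
-/

open Real

/-- `z ↦ B y z + B z y - B y y` is the Newton linearization of `x ↦ B x x` at `y`. -/
theorem LinearMap.apply_self_sub_newton_linearization {R M N : Type*} [CommRing R]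
    [AddCommGroup M] [Module R M] [AddCommGroup N] [Module R N] (B : M →ₗ[R] M →ₗ[R] N)
    (x y z : M) :
    B x x - (B y z + B z y - B y y) = B (x - y) (x - y) + B y (x - z) + B (x - z) y := by
  simp only [map_sub, LinearMap.sub_apply]
  abel

theorem sq_mul_pow_three_mul_le {β μ c X Y : ℝ} (hβ : 0 ≤ β) (hc : 0 < c)
    (hμ : β / (4 * c ^ 2) ≤ μ) (hX : 0 ≤ X) (hY : 0 ≤ Y) :
    β ^ 2 * X ^ 3 * (c * X + Y) ≤ 2 * c * (β * X ^ 2 + μ * Y ^ 2) ^ 2 := by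
  set T := 4 * c ^ 2 * X ^ 2 + Y ^ 2
  have hT : 8 * c ^ 3 * X ^ 3 * (c * X + Y) ≤ T ^ 2 := by
    have : T ^ 2 - 8 * c ^ 3 * X ^ 3 * (c * X + Y)
        = 8 * (c * X) ^ 2 * ((c * X - Y) ^ 2 + c * X * Y) + Y ^ 4 := by ring
    have : 0 ≤ c * X * Y := by positivity
    nlinarith [sq_nonneg (c * X - Y), sq_nonneg (c * X)]
  have hβT : β * T ≤ 4 * c ^ 2 * (β * X ^ 2 + μ * Y ^ 2) := by
    have := (div_le_iff₀ (by positivity)).1 hμ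
    nlinarith [mul_le_mul_of_nonneg_right this (sq_nonneg Y)]
  have hsq : (β * T) ^ 2 ≤ (4 * c ^ 2 * (β * X ^ 2 + μ * Y ^ 2)) ^ 2 :=
    pow_le_pow_left₀ (by positivity) hβT 2
  have h8 : 8 * c ^ 3 * (β ^ 2 * X ^ 3 * (c * X + Y))
      ≤ 8 * c ^ 3 * (2 * c * (β * X ^ 2 + μ * Y ^ 2) ^ 2) := by
    nlinarith [mul_le_mul_of_nonneg_left hT (sq_nonneg β)]
  exact le_of_mul_le_mul_left h8 (by positivity)

theorem mul_le_of_add_sq_le_mul_sqrt {β μ c K X Y : ℝ} (hβ : 0 < β) (hc : 0 < c)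
    (hμ : β / (4 * c ^ 2) ≤ μ) (hK : 0 ≤ K) (hX : 0 ≤ X) (hY : 0 ≤ Y)
    (h : β * X ^ 2 + μ * Y ^ 2 ≤ K * √X * √(c * X + Y)) :
    β * X ≤ K * √(2 * c) := by
  rcases hX.eq_or_lt with rfl | hX
  · simp only [mul_zero]; positivity
  have hP : 0 < X * (c * X + Y) := by positivity
  have hμ0 : 0 ≤ μ := (by positivity : 0 ≤ β / (4 * c ^ 2)).trans hμ
  have hS : 0 ≤ β * X ^ 2 + μ * Y ^ 2 := by positivity
  have hsq : (β * X ^ 2 + μ * Y ^ 2) ^ 2 ≤ K ^ 2 * (X * (c * X + Y)) := by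
    calc (β * X ^ 2 + μ * Y ^ 2) ^ 2 ≤ (K * √X * √(c * X + Y)) ^ 2 := pow_le_pow_left₀ hS h 2
      _ = K ^ 2 * (X * (c * X + Y)) := by
        rw [mul_pow, mul_pow, sq_sqrt hX.le, sq_sqrt (by positivity)]; ring
  have hcancel : (β * X) ^ 2 * (X * (c * X + Y)) ≤ (2 * c * K ^ 2) * (X * (c * X + Y)) := by
    nlinarith [sq_mul_pow_three_mul_le hβ.le hc hμ hX.le hY]
  rw [← pow_le_pow_iff_left₀ (by positivity) (by positivity) two_ne_zero, mul_pow K,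
    sq_sqrt (by positivity)]
  nlinarith [le_of_mul_le_mul_right hcancel hP]

theorem norm_le_of_norm_sub_le {V W : Type*} [SeminormedAddCommGroup V]
    [SeminormedAddCommGroup W] (G : V → W) (IH : V → V) {C : ℝ}
    (hIH : ∀ v, ‖v - IH v‖ ≤ C * ‖G v‖) (v : V) :
    ‖v‖ ≤ C * ‖G v‖ + ‖IH v‖ :=
  (norm_le_norm_sub_add v (IH v)).trans (by gcongr; exact hIH v)

section CDANewton

variable {V W : Type*} [NormedAddCommGroup V] [InnerProductSpace ℝ V]
  [NormedAddCommGroup W] [InnerProductSpace ℝ W]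
  (G : V →ₗ[ℝ] W) (b : V →ₗ[ℝ] V →ₗ[ℝ] V →ₗ[ℝ] ℝ) (IH : V →ₗ[ℝ] V)

theorem cdaNewton_error_energy_eq (f : V →ₗ[ℝ] ℝ) {ν μ : ℝ} (hbskew : ∀ u v : V, b u v v = 0)
    {u uk uk1 : V} (hu : ∀ v : V, ν * (inner ℝ (G u) (G v) : ℝ) + b u u v = f v)
    (hstep : ∀ v : V, ν * (inner ℝ (G uk1) (G v) : ℝ) + b uk uk1 v + b uk1 uk v
      + μ * (inner ℝ (IH (uk1 - u)) (IH v) : ℝ) = f v + b uk uk v) :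
    ν * ‖G (u - uk1)‖ ^ 2 + μ * ‖IH (u - uk1)‖ ^ 2
      = -b (u - uk) (u - uk) (u - uk1) - b (u - uk1) uk (u - uk1) := by
  set e := u - uk1
  have hG : ‖G e‖ ^ 2 = inner ℝ (G u) (G e) - inner ℝ (G uk1) (G e) := by
    rw [← inner_sub_left, ← map_sub, real_inner_self_eq_norm_sq]
  have hIH : ‖IH e‖ ^ 2 = -inner ℝ (IH (uk1 - u)) (IH e) := by
    rw [← neg_sub, map_neg, inner_neg_left, neg_neg, real_inner_self_eq_norm_sq]
  have hnewton := congrArg (· e) (b.apply_self_sub_newton_linearization u uk uk1)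
  simp only [LinearMap.sub_apply, LinearMap.add_apply] at hnewton
  rw [hG, hIH]
  linear_combination hu e - hstep e - hnewton - hbskew uk e

theorem cdaNewton_error_energy_le {M ν μ : ℝ}
    (hb2 : ∀ u w v : V, |b u w v| ≤ M * ‖G u‖ * ‖G w‖ * ‖G v‖)
    (hb3 : ∀ u w v : V, |b u w v| ≤ M * ‖G u‖ * ‖G w‖ * √‖v‖ * √‖G v‖) {d e w : V}
    (h : ν * ‖G e‖ ^ 2 + μ * ‖IH e‖ ^ 2 = -b d d e - b e w e) :
    (ν - M * ‖G w‖) * ‖G e‖ ^ 2 + μ * ‖IH e‖ ^ 2 ≤ M * ‖G d‖ ^ 2 * √‖e‖ * √‖G e‖ := by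
  have hd := (neg_le_abs (b d d e)).trans (hb3 d d e)
  have he := (neg_le_abs (b e w e)).trans (hb2 e w e)
  linear_combination h + hd + he

end CDANewton

theorem cda_newton_one_step_quadratic_general
    {V W : Type*} [NormedAddCommGroup V] [InnerProductSpace ℝ V]
    [NormedAddCommGroup W] [InnerProductSpace ℝ W]
    (G : V →ₗ[ℝ] W) (b : V →ₗ[ℝ] V →ₗ[ℝ] V →ₗ[ℝ] ℝ) (f : V →ₗ[ℝ] ℝ)
    (M F ν : ℝ) (hM : 0 < M) (hν : 0 < ν)
    (hbskew : ∀ u v : V, b u v v = 0)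
    (hb2 : ∀ u w v : V, |b u w v| ≤ M * ‖G u‖ * ‖G w‖ * ‖G v‖)
    (hb3 : ∀ u w v : V, |b u w v| ≤ M * ‖G u‖ * ‖G w‖ * Real.sqrt ‖v‖ * Real.sqrt ‖G v‖)
    (IH : V →ₗ[ℝ] V) (CI H μ : ℝ) (hCI : 0 < CI) (hH : 0 < H)
    (hIH : ∀ v : V, ‖v - IH v‖ ≤ CI * H * ‖G v‖)
    (u : V) (hu : ∀ v : V, ν * (inner ℝ (G u) (G v) : ℝ) + b u u v = f v)
    (hα : 8 * (M * F / ν ^ 2) < 1)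
    (hμ' : μ ≥ (ν * (1 - 2 * (M * F / ν ^ 2))) / (4 * CI ^ 2 * H ^ 2))
    (uk uk1 : V) (hk : ‖G uk‖ ≤ 2 * ν⁻¹ * F)
    (hstep : ∀ v : V, ν * (inner ℝ (G uk1) (G v) : ℝ) + b uk uk1 v + b uk1 uk v
      + μ * (inner ℝ (IH (uk1 - u)) (IH v) : ℝ) = f v + b uk uk v)
    : ‖G (u - uk1)‖ ≤ (M * Real.sqrt (2 * CI * H) / (ν * (1 - 2 * (M * F / ν ^ 2)))) * ‖G (u - uk)‖ ^ 2 := by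
  set β := ν * (1 - 2 * (M * F / ν ^ 2))
  set e := u - uk1
  have hβ : 0 < β := mul_pos hν (by linarith)
  have hβ_le : β ≤ ν - M * ‖G uk‖ := by
    have hβ_eq : β = ν - M * (2 * ν⁻¹ * F) := by simp only [β]; field_simp
    linarith [mul_le_mul_of_nonneg_left hk hM.le]
  have henergy := cdaNewton_error_energy_le G b IH hb2 hb3
    (cdaNewton_error_energy_eq G b IH f hbskew hu hstep)
  have hkey : β * ‖G e‖ ^ 2 + μ * ‖IH e‖ ^ 2
      ≤ M * ‖G (u - uk)‖ ^ 2 * √‖G e‖ * √(CI * H * ‖G e‖ + ‖IH e‖) := by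
    calc β * ‖G e‖ ^ 2 + μ * ‖IH e‖ ^ 2
        ≤ (ν - M * ‖G uk‖) * ‖G e‖ ^ 2 + μ * ‖IH e‖ ^ 2 := by gcongr
      _ ≤ M * ‖G (u - uk)‖ ^ 2 * √‖e‖ * √‖G e‖ := henergy
      _ ≤ M * ‖G (u - uk)‖ ^ 2 * √(CI * H * ‖G e‖ + ‖IH e‖) * √‖G e‖ := by
        gcongr; exact norm_le_of_norm_sub_le G IH hIH e
      _ = _ := by ring
  have hμ : β / (4 * (CI * H) ^ 2) ≤ μ := by rwa [mul_pow, ← mul_assoc]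
  have hquad := mul_le_of_add_sq_le_mul_sqrt hβ (by positivity) hμ (by positivity)
    (norm_nonneg _) (norm_nonneg _) hkey
  rw [div_mul_eq_mul_div, le_div_iff₀ hβ, mul_assoc 2 CI H]
  linarith

theorem cda_newton_one_step_quadratic
    {V W : Type*} [NormedAddCommGroup V] [InnerProductSpace ℝ V]
    [NormedAddCommGroup W] [InnerProductSpace ℝ W]
    (G : V →ₗ[ℝ] W) (b : V →ₗ[ℝ] V →ₗ[ℝ] V →ₗ[ℝ] ℝ) (f : V →ₗ[ℝ] ℝ)
    (M F ν : ℝ) (hM : 0 < M) (hF : 0 ≤ F) (hν : 0 < ν)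
    (hbskew : ∀ u v : V, b u v v = 0)
    (hb1 : ∀ u w v : V, |b u w v| ≤ M * Real.sqrt ‖u‖ * Real.sqrt ‖G u‖ * ‖G w‖ * ‖G v‖)
    (hb2 : ∀ u w v : V, |b u w v| ≤ M * ‖G u‖ * ‖G w‖ * ‖G v‖)
    (hb3 : ∀ u w v : V, |b u w v| ≤ M * ‖G u‖ * ‖G w‖ * Real.sqrt ‖v‖ * Real.sqrt ‖G v‖)
    (hf : ∀ v : V, |f v| ≤ F * ‖G v‖)
    (IH : V →ₗ[ℝ] V) (CI H μ : ℝ) (hCI : 0 < CI) (hH : 0 < H) (hμ : 0 < μ)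
    (hIH : ∀ v : V, ‖v - IH v‖ ≤ CI * H * ‖G v‖)
    (u : V) (hu : ∀ v : V, ν * (inner ℝ (G u) (G v) : ℝ) + b u u v = f v)
    (hα : 8 * (M * F / ν ^ 2) < 1)
    (hμ' : μ ≥ (ν * (1 - 2 * (M * F / ν ^ 2))) / (4 * CI ^ 2 * H ^ 2))
    (uk uk1 : V) (hk : ‖G uk‖ ≤ 2 * ν⁻¹ * F)
    (hstep : ∀ v : V, ν * (inner ℝ (G uk1) (G v) : ℝ) + b uk uk1 v + b uk1 uk v
      + μ * (inner ℝ (IH (uk1 - u)) (IH v) : ℝ) = f v + b uk uk v)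
    : ‖G (u - uk1)‖ ≤ (M * Real.sqrt (2 * CI * H) / (ν * (1 - 2 * (M * F / ν ^ 2)))) * ‖G (u - uk)‖ ^ 2 :=
  cda_newton_one_step_quadratic_general G b f M F ν hM hν hbskew hb2 hb3 IH CI H μ hCI hH hIH u hu
    hα hμ' uk uk1 hk hstep
end

section
/- (One-step bound for CDA-Newton without smallness on α, key estimate in Theorem 4.2) Assume μ ≥ ν/(8 C_I² H²). Let u ∈ V be a weak NSE solution, let u_{k+1} ∈ V be a CDA-Newton step from u_k ∈ V, write e_j = u − u_j, and let A > 0 satisfy ν/(16 C_I² H²) − M⁴/(16 A² ν) − (64 M⁴/ν³) ‖G e_k‖⁴ − 64 ν α⁴ ≥ 0, where α = M ν⁻² F. Then ‖G e_{k+1}‖ ≤ √(8A/ν) ‖G e_k‖². -/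
/-! Subtracting the NSE from the CDA-Newton step and testing with `e = u - u_{k+1}` kills
`b(u_k, e, e)` and bounds `ν‖∇e‖² + μ‖I_H e‖²` by three trilinear terms, each carrying a factor
`√(‖e‖ ‖∇e‖)`. Young's inequality turns their sum into `A‖∇e_k‖⁴ + 3ν/4 ‖∇e‖² + β‖e‖²`, and the
condition on `A` gives `β ≤ ν / (16 C_I² H²)`. Since `‖e‖² ≤ 2 C_I² H² ‖∇e‖² + 2‖I_H e‖²`, the
nudging bound `μ ≥ ν / (8 C_I² H²)` absorbs `β‖e‖²` into the left-hand side, which leaves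
`ν/8 ‖∇e‖² ≤ A ‖∇e_k‖⁴`. -/

lemma mul_le_mul_sq_add_sq_div {ε : ℝ} (hε : 0 < ε) (a b : ℝ) :
    a * b ≤ ε * a ^ 2 + b ^ 2 / (4 * ε) := by
  have h : ε * a ^ 2 + b ^ 2 / (4 * ε) - a * b = (2 * ε * a - b) ^ 2 / (4 * ε) := by
    field_simp; ring
  nlinarith [div_nonneg (sq_nonneg (2 * ε * a - b)) (by positivity : (0 : ℝ) ≤ 4 * ε)]

section Young

variable {ν x g r : ℝ}

lemma mul_sq_mul_le_of_sq_eq_mul (hν : 0 < ν) {A : ℝ} (hA : 0 < A) (hr : r ^ 2 = x * g)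
    (M k : ℝ) :
    M * k ^ 2 * r ≤ A * k ^ 4 + ν / 4 * g ^ 2 + M ^ 4 / (16 * A ^ 2 * ν) * x ^ 2 := by
  have h1 := mul_le_mul_sq_add_sq_div hA (k ^ 2) (M * r)
  have h2 := mul_le_mul_sq_add_sq_div (by positivity : 0 < ν / 4) g (M ^ 2 / (4 * A) * x)
  have e1 : (M * r) ^ 2 / (4 * A) = g * (M ^ 2 / (4 * A) * x) := by rw [mul_pow, hr]; ring
  have e2 : (M ^ 2 / (4 * A) * x) ^ 2 / (4 * (ν / 4)) = M ^ 4 / (16 * A ^ 2 * ν) * x ^ 2 := by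
    field_simp; ring
  linarith

lemma mul_mul_le_of_sq_eq_mul (hν : 0 < ν) (hr : r ^ 2 = x * g) (B : ℝ) :
    B * r * g ≤ ν / 4 * g ^ 2 + 8 * B ^ 4 / ν ^ 3 * x ^ 2 := by
  have h1 := mul_le_mul_sq_add_sq_div (by positivity : 0 < ν / 8) g (B * r)
  have h2 := mul_le_mul_sq_add_sq_div (by positivity : 0 < ν / 8) g (2 * B ^ 2 / ν * x)
  have e1 : (B * r) ^ 2 / (4 * (ν / 8)) = g * (2 * B ^ 2 / ν * x) := by
    rw [mul_pow, hr]; field_simp; ring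
  have e2 : (2 * B ^ 2 / ν * x) ^ 2 / (4 * (ν / 8)) = 8 * B ^ 4 / ν ^ 3 * x ^ 2 := by
    field_simp; ring
  linarith

end Young

lemma sq_le_of_energy_le {ν μ A c M B k x g y r : ℝ} (hν : 0 < ν) (hA : 0 < A) (hc : c ≠ 0)
    (hr : r ^ 2 = x * g)
    (henergy : ν * g ^ 2 + μ * y ^ 2 ≤ M * k ^ 2 * r + B * r * g + M * k * r * g)
    (hinterp : x ^ 2 ≤ 2 * c ^ 2 * g ^ 2 + 2 * y ^ 2) (hμ : ν / (8 * c ^ 2) ≤ μ)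
    (hcoeff : M ^ 4 / (16 * A ^ 2 * ν) + 8 * B ^ 4 / ν ^ 3 + 8 * (M * k) ^ 4 / ν ^ 3
      ≤ ν / (16 * c ^ 2)) :
    ν / 8 * g ^ 2 ≤ A * k ^ 4 := by
  have habsorb : (M ^ 4 / (16 * A ^ 2 * ν) + 8 * B ^ 4 / ν ^ 3 + 8 * (M * k) ^ 4 / ν ^ 3)
      * x ^ 2 ≤ ν / 8 * g ^ 2 + μ * y ^ 2 :=
    calc _ ≤ ν / (16 * c ^ 2) * x ^ 2 := by gcongr
      _ ≤ ν / (16 * c ^ 2) * (2 * c ^ 2 * g ^ 2 + 2 * y ^ 2) := by gcongr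
      _ = ν / 8 * g ^ 2 + ν / (8 * c ^ 2) * y ^ 2 := by field_simp; ring
      _ ≤ ν / 8 * g ^ 2 + μ * y ^ 2 := by gcongr
  linarith [mul_sq_mul_le_of_sq_eq_mul hν hA hr M k, mul_mul_le_of_sq_eq_mul hν hr B,
    mul_mul_le_of_sq_eq_mul hν hr (M * k)]

lemma le_sqrt_mul_sq_of_energy_le {ν μ A c M F k x g y r w : ℝ} (hν : 0 < ν) (hA : 0 < A)
    (hc : c ≠ 0) (hw : 0 ≤ w) (hwF : w ≤ F / ν) (hr : r ^ 2 = x * g)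
    (henergy : ν * g ^ 2 + μ * y ^ 2 ≤ M * k ^ 2 * r + M * w * r * g + M * k * r * g)
    (hinterp : x ^ 2 ≤ 2 * c ^ 2 * g ^ 2 + 2 * y ^ 2) (hμ : ν / (8 * c ^ 2) ≤ μ)
    (hcond : ν / (16 * c ^ 2) - M ^ 4 / (16 * A ^ 2 * ν) - (64 * M ^ 4 / ν ^ 3) * k ^ 4
      - 64 * ν * (M * F / ν ^ 2) ^ 4 ≥ 0) :
    g ≤ Real.sqrt (8 * A / ν) * k ^ 2 := by
  have hMw : 8 * (M * w) ^ 4 / ν ^ 3 ≤ 64 * ν * (M * F / ν ^ 2) ^ 4 :=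
    calc _ = 8 * (M ^ 4 * w ^ 4) / ν ^ 3 := by ring
      _ ≤ 8 * (M ^ 4 * (F / ν) ^ 4) / ν ^ 3 := by gcongr
      _ ≤ 8 * (8 * (M ^ 4 * (F / ν) ^ 4) / ν ^ 3) :=
        le_mul_of_one_le_left (by positivity) (by norm_num)
      _ = 64 * ν * (M * F / ν ^ 2) ^ 4 := by field_simp; ring
  have hMk : 8 * (M * k) ^ 4 / ν ^ 3 ≤ (64 * M ^ 4 / ν ^ 3) * k ^ 4 :=
    calc _ = 8 * (M ^ 4 / ν ^ 3 * k ^ 4) := by ring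
      _ ≤ 64 * (M ^ 4 / ν ^ 3 * k ^ 4) := by gcongr; norm_num
      _ = (64 * M ^ 4 / ν ^ 3) * k ^ 4 := by ring
  have hg : ν / 8 * g ^ 2 ≤ A * k ^ 4 :=
    sq_le_of_energy_le hν hA hc hr henergy hinterp hμ (by linarith)
  have hg' : g ^ 2 ≤ 8 * A / ν * (k ^ 2) ^ 2 := by
    rw [div_mul_eq_mul_div, le_div_iff₀ hν]
    linarith
  calc g ≤ |g| := le_abs_self g
    _ ≤ Real.sqrt (8 * A / ν * (k ^ 2) ^ 2) := Real.abs_le_sqrt hg'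
    _ = Real.sqrt (8 * A / ν) * k ^ 2 := by
      rw [Real.sqrt_mul (by positivity), Real.sqrt_sq (by positivity)]

section CDANewton

variable {V W : Type*} [NormedAddCommGroup V] [InnerProductSpace ℝ V]
    [NormedAddCommGroup W] [InnerProductSpace ℝ W]
    {G : V →ₗ[ℝ] W} {b : V →ₗ[ℝ] V →ₗ[ℝ] V →ₗ[ℝ] ℝ}

lemma norm_le_of_weak_solution {f : V →ₗ[ℝ] ℝ} {F ν : ℝ} (hF : 0 ≤ F) (hν : 0 < ν)
    (hbskew : ∀ u v : V, b u v v = 0) (hf : ∀ v : V, |f v| ≤ F * ‖G v‖) {u : V}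
    (hu : ∀ v : V, ν * (inner ℝ (G u) (G v) : ℝ) + b u u v = f v) :
    ‖G u‖ ≤ F / ν := by
  have henergy : ν * ‖G u‖ ^ 2 ≤ F * ‖G u‖ := by
    rw [← real_inner_self_eq_norm_sq, ← add_zero (ν * _), ← hbskew u u, hu u]
    exact (le_abs_self _).trans (hf u)
  rw [le_div_iff₀ hν]
  rcases (norm_nonneg (G u)).eq_or_lt with h0 | hpos
  · rw [← h0]; simpa using hF
  · nlinarith

lemma sq_norm_le_of_norm_sub_le {I : V →ₗ[ℝ] V} {c : ℝ} (hI : ∀ v : V, ‖v - I v‖ ≤ c * ‖G v‖)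
    (v : V) : ‖v‖ ^ 2 ≤ 2 * c ^ 2 * ‖G v‖ ^ 2 + 2 * ‖I v‖ ^ 2 := by
  have h : ‖v‖ ≤ c * ‖G v‖ + ‖I v‖ := by linarith [norm_le_norm_sub_add v (I v), hI v]
  nlinarith [norm_nonneg v, sq_nonneg (c * ‖G v‖ - ‖I v‖)]

lemma cda_newton_error_energy_eq {f : V →ₗ[ℝ] ℝ} {I : V →ₗ[ℝ] V} {ν μ : ℝ}
    (hbskew : ∀ u v : V, b u v v = 0) {u uk uk1 : V}
    (hu : ∀ v : V, ν * (inner ℝ (G u) (G v) : ℝ) + b u u v = f v)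
    (hstep : ∀ v : V, ν * (inner ℝ (G uk1) (G v) : ℝ) + b uk uk1 v + b uk1 uk v
      + μ * (inner ℝ (I (uk1 - u)) (I v) : ℝ) = f v + b uk uk v) :
    ν * ‖G (u - uk1)‖ ^ 2 + μ * ‖I (u - uk1)‖ ^ 2 =
      -b (u - uk) (u - uk) (u - uk1) - b (u - uk1) u (u - uk1)
        + b (u - uk1) (u - uk) (u - uk1) := by
  obtain ⟨e, rfl⟩ : ∃ e, uk1 = u - e := ⟨u - uk1, (sub_sub_cancel u uk1).symm⟩
  obtain ⟨ε, rfl⟩ : ∃ ε, uk = u - ε := ⟨u - uk, (sub_sub_cancel u uk).symm⟩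
  have hskew := hbskew (u - ε) e
  have hstep := hstep e
  simp only [sub_sub_cancel, sub_sub_cancel_left, map_sub, map_neg, LinearMap.sub_apply,
    inner_sub_left, inner_neg_left] at hstep hskew ⊢
  rw [← real_inner_self_eq_norm_sq, ← real_inner_self_eq_norm_sq]
  linear_combination hu e - hstep - hskew

lemma cda_newton_error_energy_le {f : V →ₗ[ℝ] ℝ} {I : V →ₗ[ℝ] V} {M ν μ : ℝ}
    (hbskew : ∀ u v : V, b u v v = 0)
    (hb1 : ∀ u w v : V, |b u w v| ≤ M * Real.sqrt ‖u‖ * Real.sqrt ‖G u‖ * ‖G w‖ * ‖G v‖)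
    (hb3 : ∀ u w v : V, |b u w v| ≤ M * ‖G u‖ * ‖G w‖ * Real.sqrt ‖v‖ * Real.sqrt ‖G v‖)
    {u uk uk1 : V} (hu : ∀ v : V, ν * (inner ℝ (G u) (G v) : ℝ) + b u u v = f v)
    (hstep : ∀ v : V, ν * (inner ℝ (G uk1) (G v) : ℝ) + b uk uk1 v + b uk1 uk v
      + μ * (inner ℝ (I (uk1 - u)) (I v) : ℝ) = f v + b uk uk v) :
    ν * ‖G (u - uk1)‖ ^ 2 + μ * ‖I (u - uk1)‖ ^ 2 ≤
      M * ‖G (u - uk)‖ ^ 2 * Real.sqrt (‖u - uk1‖ * ‖G (u - uk1)‖)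
      + M * ‖G u‖ * Real.sqrt (‖u - uk1‖ * ‖G (u - uk1)‖) * ‖G (u - uk1)‖
      + M * ‖G (u - uk)‖ * Real.sqrt (‖u - uk1‖ * ‖G (u - uk1)‖) * ‖G (u - uk1)‖ := by
  rw [cda_newton_error_energy_eq hbskew hu hstep, Real.sqrt_mul (norm_nonneg _)]
  linear_combination (neg_le_abs _).trans (hb3 (u - uk) (u - uk) (u - uk1))
    + (neg_le_abs _).trans (hb1 (u - uk1) u (u - uk1))
    + (le_abs_self _).trans (hb1 (u - uk1) (u - uk) (u - uk1))

end CDANewton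

theorem cda_newton_one_step_no_smallness_general
    {V W : Type*} [NormedAddCommGroup V] [InnerProductSpace ℝ V]
    [NormedAddCommGroup W] [InnerProductSpace ℝ W]
    (G : V →ₗ[ℝ] W) (b : V →ₗ[ℝ] V →ₗ[ℝ] V →ₗ[ℝ] ℝ) (f : V →ₗ[ℝ] ℝ)
    (M F ν : ℝ) (hF : 0 ≤ F) (hν : 0 < ν)
    (hbskew : ∀ u v : V, b u v v = 0)
    (hb1 : ∀ u w v : V, |b u w v| ≤ M * Real.sqrt ‖u‖ * Real.sqrt ‖G u‖ * ‖G w‖ * ‖G v‖)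
    (hb3 : ∀ u w v : V, |b u w v| ≤ M * ‖G u‖ * ‖G w‖ * Real.sqrt ‖v‖ * Real.sqrt ‖G v‖)
    (hf : ∀ v : V, |f v| ≤ F * ‖G v‖)
    (IH : V →ₗ[ℝ] V) (CI H μ : ℝ) (hCI : 0 < CI) (hH : 0 < H)
    (hIH : ∀ v : V, ‖v - IH v‖ ≤ CI * H * ‖G v‖)
    (u : V) (hu : ∀ v : V, ν * (inner ℝ (G u) (G v) : ℝ) + b u u v = f v)
    (hμ' : μ ≥ ν / (8 * CI ^ 2 * H ^ 2))
    (uk uk1 : V)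
    (hstep : ∀ v : V, ν * (inner ℝ (G uk1) (G v) : ℝ) + b uk uk1 v + b uk1 uk v
      + μ * (inner ℝ (IH (uk1 - u)) (IH v) : ℝ) = f v + b uk uk v)
    (A : ℝ) (hA : 0 < A)
    (hcond : ν / (16 * CI ^ 2 * H ^ 2) - M ^ 4 / (16 * A ^ 2 * ν)
      - (64 * M ^ 4 / ν ^ 3) * ‖G (u - uk)‖ ^ 4 - 64 * ν * (M * F / ν ^ 2) ^ 4 ≥ 0)
    : ‖G (u - uk1)‖ ≤ Real.sqrt (8 * A / ν) * ‖G (u - uk)‖ ^ 2 := by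
  have hGu : ‖G u‖ ≤ F / ν := norm_le_of_weak_solution hF hν hbskew hf hu
  have henergy := cda_newton_error_energy_le hbskew hb1 hb3 hu hstep
  have hinterp := sq_norm_le_of_norm_sub_le hIH (u - uk1)
  have hc : CI * H ≠ 0 := by positivity
  exact le_sqrt_mul_sq_of_energy_le hν hA hc (norm_nonneg _) hGu (Real.sq_sqrt (by positivity))
    henergy hinterp (by rwa [mul_pow, ← mul_assoc]) (by rwa [mul_pow, ← mul_assoc])

theorem cda_newton_one_step_no_smallness
    {V W : Type*} [NormedAddCommGroup V] [InnerProductSpace ℝ V]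
    [NormedAddCommGroup W] [InnerProductSpace ℝ W]
    (G : V →ₗ[ℝ] W) (b : V →ₗ[ℝ] V →ₗ[ℝ] V →ₗ[ℝ] ℝ) (f : V →ₗ[ℝ] ℝ)
    (M F ν : ℝ) (hM : 0 < M) (hF : 0 ≤ F) (hν : 0 < ν)
    (hbskew : ∀ u v : V, b u v v = 0)
    (hb1 : ∀ u w v : V, |b u w v| ≤ M * Real.sqrt ‖u‖ * Real.sqrt ‖G u‖ * ‖G w‖ * ‖G v‖)
    (hb2 : ∀ u w v : V, |b u w v| ≤ M * ‖G u‖ * ‖G w‖ * ‖G v‖)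
    (hb3 : ∀ u w v : V, |b u w v| ≤ M * ‖G u‖ * ‖G w‖ * Real.sqrt ‖v‖ * Real.sqrt ‖G v‖)
    (hf : ∀ v : V, |f v| ≤ F * ‖G v‖)
    (IH : V →ₗ[ℝ] V) (CI H μ : ℝ) (hCI : 0 < CI) (hH : 0 < H) (hμ : 0 < μ)
    (hIH : ∀ v : V, ‖v - IH v‖ ≤ CI * H * ‖G v‖)
    (u : V) (hu : ∀ v : V, ν * (inner ℝ (G u) (G v) : ℝ) + b u u v = f v)
    (hμ' : μ ≥ ν / (8 * CI ^ 2 * H ^ 2))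
    (uk uk1 : V)
    (hstep : ∀ v : V, ν * (inner ℝ (G uk1) (G v) : ℝ) + b uk uk1 v + b uk1 uk v
      + μ * (inner ℝ (IH (uk1 - u)) (IH v) : ℝ) = f v + b uk uk v)
    (A : ℝ) (hA : 0 < A)
    (hcond : ν / (16 * CI ^ 2 * H ^ 2) - M ^ 4 / (16 * A ^ 2 * ν)
      - (64 * M ^ 4 / ν ^ 3) * ‖G (u - uk)‖ ^ 4 - 64 * ν * (M * F / ν ^ 2) ^ 4 ≥ 0)
    : ‖G (u - uk1)‖ ≤ Real.sqrt (8 * A / ν) * ‖G (u - uk)‖ ^ 2 :=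
  cda_newton_one_step_no_smallness_general G b f M F ν hF hν hbskew hb1 hb3 hf IH CI H μ hCI hH hIH
    u hu hμ' uk uk1 hstep A hA hcond
end
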